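/- arXiv:1502.04741 — 5 statements merged into one kernel-verified Lean document; each statement's English description precedes it below -/
import Mathlib

section
/- Let G be a group acting freely on types A, B, C and D (i.e., g • x = x implies g = 1 for each of these actions). Let f : A → B, j : A → C, h : B → D, k : C → D be G-equivariant functions with h ∘ f = k ∘ j, and suppose this square is a pullback square of types. Then the induced square of orbit quotients A/G → B/G, A/G → C/G, B/G → D/G, C/G → D/G (with maps induced by f, j, h, k) is again a pullback square of types. -/
/-!
Lifting is done orbitwise. Given `b`, `c` with `h b` and `k c` in one orbit, say `h b = g • k c`,
the pair `(b, g • c)` has a preimage `a` in the pullback. If `a'` is another lift, `f a' = g₁ • f a`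
and `j a' = g₂ • j a`, then applying `h` and `k` shows that `g₁` and `g₂` move the point
`h (f a) = k (j a)` of `D` to the same place, so `g₁ = g₂` by freeness of `D`; uniqueness in the
pullback then forces `a' = g₁ • a`.
-/

/-- The orbit quotient of a `G`-type. -/
def OrbitQuot (G : Type*) [Group G] (X : Type*) [MulAction G X] : Type _ :=
  Quotient (MulAction.orbitRel G X)

/-- The map on orbit quotients induced by a `G`-equivariant map. -/
def orbitMap {G : Type*} [Group G] {X Y : Type*} [MulAction G X] [MulAction G Y]
    (f : X → Y) (hf : ∀ (g : G) (x : X), f (g • x) = g • f x) :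
    OrbitQuot G X → OrbitQuot G Y :=
  Quotient.map f (by
    rintro x x' ⟨g, rfl⟩
    exact ⟨g, (hf g x').symm⟩)

namespace OrbitQuot

variable {G : Type*} [Group G] {X : Type*} [MulAction G X]

def mk (x : X) : OrbitQuot G X := Quotient.mk _ x

@[elab_as_elim]
theorem ind {p : OrbitQuot G X → Prop} (hp : ∀ x, p (mk x)) (q : OrbitQuot G X) : p q :=
  Quotient.ind hp q

theorem mk_eq_mk_iff {x y : X} : (mk x : OrbitQuot G X) = mk y ↔ ∃ g : G, g • y = x :=
  Quotient.eq_iff_equiv.trans MulAction.orbitRel_apply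

end OrbitQuot

open OrbitQuot

section Square

variable {G : Type*} [Group G] {A B C D : Type*}
  [MulAction G A] [MulAction G B] [MulAction G C] [MulAction G D]
  {f : A → B} {j : A → C} {h : B → D} {k : C → D}
  (hf : ∀ (g : G) (a : A), f (g • a) = g • f a)
  (hj : ∀ (g : G) (a : A), j (g • a) = g • j a)

theorem orbitMap_comp_eq_of_comp_eq
    (hh : ∀ (g : G) (b : B), h (g • b) = g • h b) (hk : ∀ (g : G) (c : C), k (g • c) = g • k c)
    (hcomm : h ∘ f = k ∘ j) :
    orbitMap h hh ∘ orbitMap f hf = orbitMap k hk ∘ orbitMap j hj := by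
  funext qa
  induction qa using OrbitQuot.ind with
  | hp a => exact congrArg mk (congrFun hcomm a)

theorem exists_orbitMap_eq_of_exists_lift
    (hh : ∀ (g : G) (b : B), h (g • b) = g • h b) (hk : ∀ (g : G) (c : C), k (g • c) = g • k c)
    (hlift : ∀ b c, h b = k c → ∃ a, f a = b ∧ j a = c)
    {qb : OrbitQuot G B} {qc : OrbitQuot G C} (hbc : orbitMap h hh qb = orbitMap k hk qc) :
    ∃ qa, orbitMap f hf qa = qb ∧ orbitMap j hj qa = qc := by
  induction qb using OrbitQuot.ind with | hp b =>
  induction qc using OrbitQuot.ind with | hp c =>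
  obtain ⟨g, hg⟩ := mk_eq_mk_iff.mp hbc
  obtain ⟨a, rfl, hja⟩ := hlift b (g • c) (by rw [hk, hg])
  exact ⟨mk a, rfl, mk_eq_mk_iff.mpr ⟨g, hja.symm⟩⟩

theorem orbitMap_pair_injective [IsCancelSMul G D]
    (hh : ∀ (g : G) (b : B), h (g • b) = g • h b) (hk : ∀ (g : G) (c : C), k (g • c) = g • k c)
    (hcomm : h ∘ f = k ∘ j)
    (hinj : ∀ a a', f a = f a' → j a = j a' → a = a')
    {qa qa' : OrbitQuot G A} (hfa : orbitMap f hf qa' = orbitMap f hf qa)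
    (hja : orbitMap j hj qa' = orbitMap j hj qa) : qa' = qa := by
  induction qa using OrbitQuot.ind with | hp a =>
  induction qa' using OrbitQuot.ind with | hp a' =>
  obtain ⟨g₁, hg₁⟩ := mk_eq_mk_iff.mp hfa
  obtain ⟨g₂, hg₂⟩ := mk_eq_mk_iff.mp hja
  have hsq : ∀ a, h (f a) = k (j a) := congrFun hcomm
  have hd : g₁ • k (j a) = g₂ • k (j a) :=
    calc g₁ • k (j a) = h (f a') := by rw [← hsq, ← hh, hg₁]
      _ = k (j a') := hsq a'
      _ = g₂ • k (j a) := by rw [← hg₂, hk]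
  obtain rfl := IsCancelSMul.right_cancel _ _ _ hd
  refine mk_eq_mk_iff.mpr ⟨g₁, hinj _ _ ?_ ?_⟩ <;> simp only [hf, hj, hg₁, hg₂]

end Square

theorem orbit_quotient_pullback_general
    {G : Type*} [Group G] {A B C D : Type*}
    [MulAction G A] [MulAction G B] [MulAction G C] [MulAction G D]
    (freeD : ∀ (g : G) (d : D), g • d = d → g = 1)
    (f : A → B) (j : A → C) (h : B → D) (k : C → D)
    (hf : ∀ (g : G) (a : A), f (g • a) = g • f a)
    (hj : ∀ (g : G) (a : A), j (g • a) = g • j a)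
    (hh : ∀ (g : G) (b : B), h (g • b) = g • h b)
    (hk : ∀ (g : G) (c : C), k (g • c) = g • k c)
    (hcomm : h ∘ f = k ∘ j)
    (hpb : ∀ (b : B) (c : C), h b = k c → ∃! a : A, f a = b ∧ j a = c) :
    (orbitMap h hh ∘ orbitMap f hf = orbitMap k hk ∘ orbitMap j hj) ∧
    ∀ (qb : OrbitQuot G B) (qc : OrbitQuot G C),
      orbitMap h hh qb = orbitMap k hk qc →
      ∃! qa : OrbitQuot G A, orbitMap f hf qa = qb ∧ orbitMap j hj qa = qc := by
  have : IsCancelSMul G D := isCancelSMul_iff_eq_one_of_smul_eq.mpr freeD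
  have hinj : ∀ a a', f a = f a' → j a = j a' → a = a' := fun a a' hfa hja =>
    (hpb _ _ (congrFun hcomm a)).unique ⟨rfl, rfl⟩ ⟨hfa.symm, hja.symm⟩
  refine ⟨orbitMap_comp_eq_of_comp_eq hf hj hh hk hcomm, fun qb qc hbc => ?_⟩
  obtain ⟨qa, hfa, hja⟩ :=
    exists_orbitMap_eq_of_exists_lift hf hj hh hk (fun b c hbc => (hpb b c hbc).exists) hbc
  exact ⟨qa, ⟨hfa, hja⟩, fun qa' ⟨hfa', hja'⟩ =>
    orbitMap_pair_injective hf hj hh hk hcomm hinj (hfa'.trans hfa.symm) (hja'.trans hja.symm)⟩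

/-- Passage to orbits of free actions of a group preserves pullback squares of types. -/
theorem orbit_quotient_pullback
    {G : Type*} [Group G] {A B C D : Type*}
    [MulAction G A] [MulAction G B] [MulAction G C] [MulAction G D]
    (freeA : ∀ (g : G) (a : A), g • a = a → g = 1)
    (freeB : ∀ (g : G) (b : B), g • b = b → g = 1)
    (freeC : ∀ (g : G) (c : C), g • c = c → g = 1)
    (freeD : ∀ (g : G) (d : D), g • d = d → g = 1)
    (f : A → B) (j : A → C) (h : B → D) (k : C → D)
    (hf : ∀ (g : G) (a : A), f (g • a) = g • f a)
    (hj : ∀ (g : G) (a : A), j (g • a) = g • j a)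
    (hh : ∀ (g : G) (b : B), h (g • b) = g • h b)
    (hk : ∀ (g : G) (c : C), k (g • c) = g • k c)
    (hcomm : h ∘ f = k ∘ j)
    (hpb : ∀ (b : B) (c : C), h b = k c → ∃! a : A, f a = b ∧ j a = c) :
    (orbitMap h hh ∘ orbitMap f hf = orbitMap k hk ∘ orbitMap j hj) ∧
    ∀ (qb : OrbitQuot G B) (qc : OrbitQuot G C),
      orbitMap h hh qb = orbitMap k hk qc →
      ∃! qa : OrbitQuot G A, orbitMap f hf qa = qb ∧ orbitMap j hj qa = qc :=
  orbit_quotient_pullback_general freeD f j h k hf hj hh hk hcomm hpb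
end

section
/- Let D : ℕ → Type be a family of types such that for each n, D n carries a free action of the symmetric group Equiv.Perm (Fin n). Then the associated endofunctor 𝔻 of types preserves pullbacks: for every pullback square of types f : A → B, j : A → C, h : B → Z, k : C → Z, the square 𝔻f : 𝔻A → 𝔻B, 𝔻j : 𝔻A → 𝔻C, 𝔻h : 𝔻B → 𝔻Z, 𝔻k : 𝔻C → 𝔻Z is again a pullback square of types. (This is the pullback-preservation part of the theorem that the monad associated to a Σ-free operad in Set is Cartesian.) -/
/-- The relation on `D n × (Fin n → X)` identifying `(d, x)` with
`σ • (d, x) = (σ • d, x ∘ σ⁻¹)`. -/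
def OpRel (D : ℕ → Type) [∀ n, MulAction (Equiv.Perm (Fin n)) (D n)] (X : Type) (n : ℕ)
    (p q : D n × (Fin n → X)) : Prop :=
  ∃ σ : Equiv.Perm (Fin n), σ • p.1 = q.1 ∧ p.2 ∘ σ.symm = q.2

/-- The endofunctor of types associated to a family `D` with symmetric group actions:
`𝔻 X := Σ n, (D n × (Fin n → X)) / Perm (Fin n)`. -/
def DD (D : ℕ → Type) [∀ n, MulAction (Equiv.Perm (Fin n)) (D n)] (X : Type) : Type :=
  Σ n : ℕ, Quot (OpRel D X n)

/-- The action of the endofunctor `𝔻` on functions, induced by `(d, x) ↦ (d, f ∘ x)`. -/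
def DDmap (D : ℕ → Type) [∀ n, MulAction (Equiv.Perm (Fin n)) (D n)] {X Y : Type}
    (f : X → Y) : DD D X → DD D Y :=
  fun a => ⟨a.1, Quot.map (fun p => (p.1, f ∘ p.2))
    (fun p q hpq => by
      obtain ⟨σ, h1, h2⟩ := hpq
      exact ⟨σ, h1, congrArg (fun u => f ∘ u) h2⟩) a.2⟩

/-- A commutative square of types which is a pullback square:  for all compatible pairs
in the two middle corners there is a unique element of the top corner mapping to them. -/
def IsPB {A B C Z : Type*} (f : A → B) (j : A → C) (h : B → Z) (k : C → Z) : Prop :=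
  (∀ a, h (f a) = k (j a)) ∧ ∀ (b : B) (c : C), h b = k c → ∃! a : A, f a = b ∧ j a = c

/-!
Every element of `𝔻 C` can be written `[e, y]`, and then any element of `𝔻 B` with the same image
in `𝔻 Z` can be rewritten with the same label `e`. Freeness makes `y ↦ [e, y]` injective, so
the compatible pair `[e, x]`, `[e, y]` gives a compatible pair `(x, y)` of families
`Fin n → B`, `Fin n → C`, and pullbacks of types are preserved by `(Fin n → ·)`.
-/

theorem IsPB.pi {A B C Z : Type*} {f : A → B} {j : A → C} {h : B → Z} {k : C → Z}
    (hpb : IsPB f j h k) (ι : Type*) :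
    IsPB (fun a : ι → A => f ∘ a) (fun a => j ∘ a) (fun b => h ∘ b) (fun c => k ∘ c) := by
  refine ⟨fun a => funext fun i => hpb.1 (a i), fun b c hbc => ?_⟩
  choose a ha ha_unique using fun i => hpb.2 (b i) (c i) (congrFun hbc i)
  refine ⟨a, ⟨funext fun i => (ha i).1, funext fun i => (ha i).2⟩, ?_⟩
  rintro a' ⟨rfl, rfl⟩
  exact funext fun i => ha_unique i (a' i) ⟨rfl, rfl⟩

section

variable (D : ℕ → Type) [∀ n, MulAction (Equiv.Perm (Fin n)) (D n)]

theorem opRel_equivalence (X : Type) (n : ℕ) : Equivalence (OpRel D X n) where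
  refl _ := ⟨1, one_smul _ _, rfl⟩
  symm := fun ⟨σ, h₁, h₂⟩ => ⟨σ⁻¹, by rw [← h₁, inv_smul_smul], by
    rw [← h₂]; funext i; simp [Equiv.Perm.inv_def]⟩
  trans := fun ⟨σ, h₁, h₂⟩ ⟨τ, h₃, h₄⟩ => ⟨τ * σ, by rw [mul_smul, h₁, h₃], by
    rw [← h₄, ← h₂]; funext i; simp [Equiv.Perm.mul_def]⟩

/-- The class `[d, x]` of `(d, x) ∈ D n × (Fin n → X)` in `𝔻 X`. -/
def DD.mk {X : Type} (n : ℕ) (d : D n) (x : Fin n → X) : DD D X :=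
  ⟨n, Quot.mk _ (d, x)⟩

variable {D}

theorem DD.exists_eq_mk {X : Type} (a : DD D X) : ∃ n d x, a = DD.mk D n d x := by
  obtain ⟨n, q⟩ := a
  induction q using Quot.ind with
  | mk p => exact ⟨n, p.1, p.2, rfl⟩

@[simp]
theorem DDmap_mk {X Y : Type} (f : X → Y) (n : ℕ) (d : D n) (x : Fin n → X) :
    DDmap D f (DD.mk D n d x) = DD.mk D n d (f ∘ x) :=
  rfl

theorem DDmap_comp {X Y W : Type} (f : X → Y) (g : Y → W) (a : DD D X) :
    DDmap D g (DDmap D f a) = DDmap D (g ∘ f) a := by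
  obtain ⟨n, d, x, rfl⟩ := a.exists_eq_mk
  rfl

theorem DD.mk_eq_mk_iff {X : Type} {n : ℕ} {d e : D n} {x y : Fin n → X} :
    DD.mk D n d x = DD.mk D n e y ↔ OpRel D X n (d, x) (e, y) := by
  refine ⟨fun hxy => ?_, fun hrel => congrArg (Sigma.mk n) (Quot.sound hrel)⟩
  exact (opRel_equivalence D X n).eqvGen_iff.mp
    (Quot.eqvGen_exact (eq_of_heq (Sigma.mk.inj_iff.mp hxy).2))

theorem DD.mk_smul {X : Type} (n : ℕ) (σ : Equiv.Perm (Fin n)) (d : D n) (x : Fin n → X) :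
    DD.mk D n (σ • d) (x ∘ σ.symm) = DD.mk D n d x :=
  DD.mk_eq_mk_iff.mpr ((opRel_equivalence D X n).symm ⟨σ, rfl, rfl⟩)

theorem DD.mk_injective_of_free {X : Type} {n : ℕ} {e : D n}
    (free : ∀ σ : Equiv.Perm (Fin n), σ • e = e → σ = 1) :
    Function.Injective (DD.mk D (X := X) n e) := by
  intro x y hxy
  obtain ⟨σ, hσe, hσx⟩ := DD.mk_eq_mk_iff.mp hxy
  obtain rfl := free σ hσe
  exact hσx

theorem DD.exists_eq_mk_of_DDmap_eq_mk {X Y : Type} {f : X → Y} {a : DD D X} {n : ℕ}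
    {e : D n} {y : Fin n → Y} (ha : DDmap D f a = DD.mk D n e y) :
    ∃ x, a = DD.mk D n e x := by
  obtain ⟨m, d, x, rfl⟩ := a.exists_eq_mk
  obtain rfl : m = n := congrArg Sigma.fst ha
  obtain ⟨σ, rfl, -⟩ := DD.mk_eq_mk_iff.mp ha
  exact ⟨x ∘ σ.symm, (DD.mk_smul m σ d x).symm⟩

end

/-- The endofunctor associated to a Σ-free family preserves pullback squares of types. -/
theorem DD_preserves_pullbacks (D : ℕ → Type) [∀ n, MulAction (Equiv.Perm (Fin n)) (D n)]
    (free : ∀ (n : ℕ) (σ : Equiv.Perm (Fin n)) (d : D n), σ • d = d → σ = 1)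
    {A B C Z : Type} (f : A → B) (j : A → C) (h : B → Z) (k : C → Z)
    (hpb : IsPB f j h k) :
    IsPB (DDmap D f) (DDmap D j) (DDmap D h) (DDmap D k) := by
  have hcomm : h ∘ f = k ∘ j := funext hpb.1
  refine ⟨fun a => by rw [DDmap_comp, DDmap_comp, hcomm], fun b c hbc => ?_⟩
  obtain ⟨n, e, y, rfl⟩ := c.exists_eq_mk
  rw [DDmap_mk] at hbc
  obtain ⟨x, rfl⟩ := DD.exists_eq_mk_of_DDmap_eq_mk hbc
  have mk_inj {X : Type} := DD.mk_injective_of_free (X := X) (free n · e)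
  obtain ⟨z, ⟨hzx, hzy⟩, hz_unique⟩ : ∃! z : Fin n → A, f ∘ z = x ∧ j ∘ z = y :=
    (hpb.pi (Fin n)).2 x y (mk_inj hbc)
  refine ⟨DD.mk D n e z, ⟨by rw [DDmap_mk, hzx], by rw [DDmap_mk, hzy]⟩, ?_⟩
  rintro a ⟨hax, hay⟩
  obtain ⟨w, rfl⟩ := DD.exists_eq_mk_of_DDmap_eq_mk hax
  rw [hz_unique w ⟨mk_inj hax, mk_inj hay⟩]
end

section
/- Let D : ℕ → Type be a family of types such that for each n, D n carries a free action of Equiv.Perm (Fin n), and let e : D 1 be a distinguished element. For each type X define the unit η_X : X → 𝔻X by η_X x = ⟨1, class of (e, fun _ => x)⟩. Then for every function f : X → Y, the naturality square of η at f — with horizontal maps η_X : X → 𝔻X and η_Y : Y → 𝔻Y and vertical maps f and 𝔻f (so that η_Y ∘ f = 𝔻f ∘ η_X) — is a pullback square of types. (This is the unit part of the theorem that the monad associated to a Σ-free operad in Set is Cartesian.) -/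
/-- The unit `η_X : X → 𝔻X` determined by a distinguished element `e : D 1`. -/
def DDunit (D : ℕ → Type) [∀ n, MulAction (Equiv.Perm (Fin n)) (D n)] (e : D 1)
    (X : Type) : X → DD D X :=
  fun x => ⟨1, Quot.mk _ (e, fun _ => x)⟩

/-! Since `Perm (Fin 1)` is trivial, the arity-one summand of `𝔻X` is just `D 1 × X`, so `η`
is injective. A commutative square whose horizontal maps are injective is a pullback as soon as
every `b : 𝔻X` with `𝔻f b` in the image of `η_Y` lies in the image of `η_X`; this holds because
`𝔻f` preserves arity and the arity-one elements over `η_Y c` have the distinguished label `e`. -/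

theorem IsPB.of_injective {A B C Z : Type*} {f : A → B} {j : A → C} {h : B → Z} {k : C → Z}
    (comm : ∀ a, h (f a) = k (j a)) (hf : f.Injective) (hk : k.Injective)
    (hrange : ∀ b c, h b = k c → b ∈ Set.range f) : IsPB f j h k := by
  refine ⟨comm, fun b c hbc => ?_⟩
  obtain ⟨a, rfl⟩ := hrange b c hbc
  exact ⟨a, ⟨rfl, hk ((comm a).symm.trans hbc)⟩, fun a' ha' => hf ha'.1⟩

section

variable (D : ℕ → Type) [∀ n, MulAction (Equiv.Perm (Fin n)) (D n)] {X Y : Type}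

theorem opRel_one_iff {p q : D 1 × (Fin 1 → X)} : OpRel D X 1 p q ↔ p = q := by
  constructor
  · rintro ⟨σ, hd, hx⟩
    obtain rfl : σ = 1 := Subsingleton.elim _ _
    exact Prod.ext (by simpa using hd) hx
  · rintro rfl
    exact ⟨1, one_smul _ _, rfl⟩

theorem DD_mk_one_injective {p q : D 1 × (Fin 1 → X)}
    (h : (⟨1, Quot.mk _ p⟩ : DD D X) = ⟨1, Quot.mk _ q⟩) : p = q := by
  have hrel : OpRel D X 1 = Eq := by
    ext
    exact opRel_one_iff D
  have hgen := Quot.eqvGen_exact (sigma_mk_injective (β := fun n => Quot (OpRel D X n)) h)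
  rw [hrel] at hgen
  exact eq_equivalence.eqvGen_iff.1 hgen

theorem DDunit_injective (e : D 1) : (DDunit D e X).Injective := fun _ _ h =>
  congrFun (Prod.ext_iff.1 (DD_mk_one_injective D h)).2 0

theorem DDmap_DDunit (e : D 1) (f : X → Y) (x : X) :
    DDmap D f (DDunit D e X x) = DDunit D e Y (f x) :=
  rfl

theorem mem_range_DDunit_of_DDmap_eq (e : D 1) (f : X → Y) {b : DD D X} {c : Y}
    (h : DDmap D f b = DDunit D e Y c) : b ∈ Set.range (DDunit D e X) := by
  obtain ⟨n, q⟩ := b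
  obtain rfl : n = 1 := congrArg Sigma.fst h
  induction q using Quot.ind with
  | mk p =>
    obtain ⟨d, v⟩ := p
    have hd : d = e := (Prod.ext_iff.1 (DD_mk_one_injective D h)).1
    subst hd
    refine ⟨v 0, ?_⟩
    have hv : (fun _ => v 0) = v := funext fun i => congrArg v (Subsingleton.elim 0 i)
    change (⟨1, Quot.mk _ (d, fun _ => v 0)⟩ : DD D X) = _
    rw [hv]

end

theorem DD_unit_naturality_pullback_general (D : ℕ → Type)
    [∀ n, MulAction (Equiv.Perm (Fin n)) (D n)]
    (e : D 1) {X Y : Type} (f : X → Y) :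
    IsPB (DDunit D e X) f (DDmap D f) (DDunit D e Y) :=
  IsPB.of_injective (DDmap_DDunit D e f) (DDunit_injective D e) (DDunit_injective D e)
    fun _ _ => mem_range_DDunit_of_DDmap_eq D e f

/-- The naturality squares of the unit of the monad associated to a Σ-free operad in `Set`
are pullbacks. -/
theorem DD_unit_naturality_pullback (D : ℕ → Type)
    [∀ n, MulAction (Equiv.Perm (Fin n)) (D n)]
    (free : ∀ (n : ℕ) (σ : Equiv.Perm (Fin n)) (d : D n), σ • d = d → σ = 1)
    (e : D 1) {X Y : Type} (f : X → Y) :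
    IsPB (DDunit D e X) f (DDmap D f) (DDunit D e Y) :=
  DD_unit_naturality_pullback_general D e f
end

section
/- Let D : ℕ → Type carry, for each n, a free action of Equiv.Perm (Fin n), together with operad composition maps γ : for every k and every n : Fin k → ℕ, a map D k × (∀ i, D (n i)) → D (∑ i, n i), satisfying the equivariance axioms of a symmetric operad in Set: (i) composing a permuted operation (a acted on by σ : Perm (Fin k)) with inputs b is the composite of a with the correspondingly permuted inputs, acted on by the block permutation σ⟨n₁,…,n_k⟩ of Fin (∑ i, n i) that permutes the blocks of sizes n i as σ permutes Fin k (conjugating the sigma-type permutation by the equivalence (Σ i, Fin (n i)) ≃ Fin (∑ i, n i)); (ii) composing a with inputs b i each acted on by τ_i : Perm (Fin (n i)) equals γ(a; b) acted on by the block sum τ₁ ⊕ ⋯ ⊕ τ_k. Then: the multiplication μ_X : 𝔻(𝔻X) → 𝔻X, sending the class of (a, (⟨n i, class of (b i, x i)⟩)_{i : Fin k}) to ⟨∑ i, n i, class of (γ(a; b), the concatenation of the tuples x i along the equivalence (Σ i, Fin (n i)) ≃ Fin (∑ i, n i))⟩, is well-defined on the iterated quotients, and for every function f : X → Y the naturality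 square of μ at f — horizontal maps μ_X and μ_Y, vertical maps 𝔻(𝔻f) and 𝔻f — is a pullback square of types. (This is the multiplication part of the theorem that the monad associated to a Σ-free operad in Set is Cartesian.) -/
/-- `Σ i : Fin (k+1), β i ≃ β 0 ⊕ Σ i : Fin k, β i.succ`. -/
def sigmaFinSucc {k : ℕ} (β : Fin (k + 1) → Type*) :
    (Σ i : Fin (k + 1), β i) ≃ (β 0 ⊕ Σ i : Fin k, β i.succ) where
  toFun p := Fin.cases (motive := fun i => β i → (β 0 ⊕ Σ i : Fin k, β i.succ))
    (fun b => Sum.inl b) (fun i b => Sum.inr ⟨i, b⟩) p.1 p.2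
  invFun s := Sum.elim (fun b => ⟨0, b⟩) (fun q => ⟨q.1.succ, q.2⟩) s
  left_inv := by
    rintro ⟨i, b⟩
    induction i using Fin.cases with
    | zero => simp
    | succ i => simp
  right_inv := by
    rintro (b | ⟨i, b⟩) <;> simp

/-- The canonical order-respecting equivalence `(Σ i, Fin (n i)) ≃ Fin (∑ i, n i)`,
concatenating the blocks `Fin (n 0), Fin (n 1), …` in order. -/
def finSigmaEquiv : ∀ {k : ℕ} (n : Fin k → ℕ), (Σ i : Fin k, Fin (n i)) ≃ Fin (∑ i, n i)
  | 0, n => (Equiv.equivOfIsEmpty _ (Fin 0)).trans (finCongr (by simp))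
  | k + 1, n =>
    ((sigmaFinSucc fun i => Fin (n i)).trans
      ((Equiv.refl (Fin (n 0))).sumCongr (finSigmaEquiv fun i : Fin k => n i.succ))).trans
      (finSumFinEquiv.trans (finCongr (Fin.sum_univ_succ n).symm))

/-- The block permutation `σ⟨n 0, …, n (k-1)⟩` of `Fin (∑ i, n i)` permuting the blocks of
sizes `n i` as `σ` permutes `Fin k`, obtained by conjugating the sigma-type permutation by
the equivalence `(Σ i, Fin (n i)) ≃ Fin (∑ i, n i)`. -/
def blockPerm {k : ℕ} (σ : Equiv.Perm (Fin k)) (n : Fin k → ℕ) :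
    Equiv.Perm (Fin (∑ i, n i)) :=
  ((finCongr (Equiv.sum_comp σ n).symm).trans
      (finSigmaEquiv fun i => n (σ i)).symm).trans
    ((Equiv.sigmaCongrLeft (β := fun i => Fin (n i)) (σ : Fin k ≃ Fin k)).trans
      (finSigmaEquiv n))

/-- The block sum `τ 0 ⊕ ⋯ ⊕ τ (k-1)` of permutations `τ i` of `Fin (n i)`, as a
permutation of `Fin (∑ i, n i)`. -/
def blockSum {k : ℕ} {n : Fin k → ℕ} (τ : ∀ i, Equiv.Perm (Fin (n i))) :
    Equiv.Perm (Fin (∑ i, n i)) :=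
  ((finSigmaEquiv n).symm.trans (Equiv.sigmaCongrRight τ)).trans (finSigmaEquiv n)

def concatEquiv (X : Type*) {k : ℕ} (n : Fin k → ℕ) :
    (∀ i, Fin (n i) → X) ≃ (Fin (∑ i, n i) → X) :=
  (Equiv.piCurry fun _ _ => X).symm.trans ((finSigmaEquiv n).arrowCongr (Equiv.refl X))

@[simp]
theorem concatEquiv_apply_finSigmaEquiv {X : Type*} {k : ℕ} (n : Fin k → ℕ)
    (x : ∀ i, Fin (n i) → X) (t : Σ i, Fin (n i)) :
    concatEquiv X n x (finSigmaEquiv n t) = x t.1 t.2 :=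
  congrArg (fun s : Σ i, Fin (n i) => x s.1 s.2) ((finSigmaEquiv n).symm_apply_apply t)

namespace DD

variable {D : ℕ → Type} [∀ n, MulAction (Equiv.Perm (Fin n)) (D n)]

theorem opRel_equivalence (X : Type) (n : ℕ) : Equivalence (OpRel D X n) where
  refl p := ⟨1, one_smul _ _, rfl⟩
  symm := by
    rintro ⟨d, x⟩ ⟨e, y⟩ ⟨σ, rfl, rfl⟩
    refine ⟨σ⁻¹, inv_smul_smul σ d, ?_⟩
    funext j
    simp [Equiv.Perm.inv_def]
  trans := by
    rintro ⟨d, x⟩ ⟨e, y⟩ ⟨e', y'⟩ ⟨σ, rfl, rfl⟩ ⟨τ, rfl, rfl⟩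
    exact ⟨τ * σ, mul_smul τ σ d, rfl⟩

theorem mk_eq_mk_iff_s3 {X : Type} {n : ℕ} (p q : D n × (Fin n → X)) :
    (⟨n, Quot.mk _ p⟩ : DD D X) = ⟨n, Quot.mk _ q⟩ ↔ OpRel D X n p q := by
  rw [Sigma.mk.inj_iff]
  simp only [heq_eq_eq, true_and]
  exact (opRel_equivalence X n).quot_mk_eq_iff p q

theorem mk_eq_mk_of_cast {X : Type} {m₁ m₂ : ℕ} (h : m₁ = m₂) (d : D m₁) (x : Fin m₁ → X)
    (σ : Equiv.Perm (Fin m₂)) :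
    (⟨m₁, Quot.mk _ (d, x)⟩ : DD D X) =
      ⟨m₂, Quot.mk _ (σ • cast (congrArg D h) d, x ∘ (finCongr h).symm ∘ σ.symm)⟩ := by
  subst h
  exact (mk_eq_mk_iff_s3 _ _).2 ⟨σ, rfl, rfl⟩

theorem eq_of_mk_eq_mk_of_free {X : Type} {m : ℕ} {d : D m}
    (free : ∀ σ : Equiv.Perm (Fin m), σ • d = d → σ = 1) {x x' : Fin m → X}
    (h : (⟨m, Quot.mk _ (d, x)⟩ : DD D X) = ⟨m, Quot.mk _ (d, x')⟩) : x = x' := by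
  obtain ⟨σ, hσd, hσx⟩ := (mk_eq_mk_iff_s3 _ _).1 h
  obtain rfl := free σ hσd
  exact hσx

theorem exists_eq_mk_s3 {X : Type} (w : DD D X) :
    ∃ (m : ℕ) (d : D m) (x : Fin m → X), w = ⟨m, Quot.mk _ (d, x)⟩ := by
  obtain ⟨m, q⟩ := w
  obtain ⟨⟨d, x⟩, rfl⟩ := q.exists_rep
  exact ⟨m, d, x, rfl⟩

theorem exists_eq_mk_mk {X : Type} (P : DD D (DD D X)) :
    ∃ (k : ℕ) (a : D k) (n : Fin k → ℕ) (b : ∀ i, D (n i)) (x : ∀ i, Fin (n i) → X),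
      P = ⟨k, Quot.mk _ (a, fun i => ⟨n i, Quot.mk _ (b i, x i)⟩)⟩ := by
  obtain ⟨k, a, y, rfl⟩ := exists_eq_mk_s3 P
  choose n b x hy using fun i => exists_eq_mk_s3 (y i)
  obtain rfl := funext hy
  exact ⟨k, a, n, b, x, rfl⟩

theorem exists_eq_mk_of_DDmap_eq_mk_s3 {X Y : Type} (f : X → Y) (w : DD D X) {m : ℕ} {d : D m}
    {y : Fin m → Y} (h : DDmap D f w = ⟨m, Quot.mk _ (d, y)⟩) :
    ∃ x : Fin m → X, w = ⟨m, Quot.mk _ (d, x)⟩ ∧ f ∘ x = y := by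
  obtain ⟨m', e, ξ, rfl⟩ := exists_eq_mk_s3 w
  obtain rfl : m' = m := congrArg Sigma.fst h
  obtain ⟨τ, rfl, rfl⟩ := (mk_eq_mk_iff_s3 _ _).1 h
  exact ⟨ξ ∘ τ.symm, (mk_eq_mk_iff_s3 _ _).2 ⟨τ, rfl, rfl⟩, rfl⟩

theorem exists_eq_mk_mk_of_DDmap_DDmap_eq {X Y : Type} (f : X → Y) (P : DD D (DD D X))
    {k : ℕ} {a : D k} {n : Fin k → ℕ} {b : ∀ i, D (n i)} {y : ∀ i, Fin (n i) → Y}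
    (h : DDmap D (DDmap D f) P = ⟨k, Quot.mk _ (a, fun i => ⟨n i, Quot.mk _ (b i, y i)⟩)⟩) :
    ∃ x : ∀ i, Fin (n i) → X,
      P = ⟨k, Quot.mk _ (a, fun i => ⟨n i, Quot.mk _ (b i, x i)⟩)⟩ ∧ ∀ i, f ∘ x i = y i := by
  obtain ⟨z, rfl, hz⟩ := exists_eq_mk_of_DDmap_eq_mk_s3 _ P h
  choose x hx hfx using fun i => exists_eq_mk_of_DDmap_eq_mk_s3 f (z i) (congrFun hz i)
  obtain rfl := funext hx
  exact ⟨x, rfl, hfx⟩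

variable (γ : ∀ (k : ℕ) (n : Fin k → ℕ), D k × (∀ i, D (n i)) → D (∑ i, n i))

def LeftEquivariant : Prop :=
  ∀ (k : ℕ) (n : Fin k → ℕ) (σ : Equiv.Perm (Fin k)) (a : D k) (b : ∀ i, D (n i)),
    γ k n (σ • a, b) =
      blockPerm σ n • (cast (congrArg D (Equiv.sum_comp σ n))
        (γ k (fun i => n (σ i)) (a, fun i => b (σ i))))

def RightEquivariant : Prop :=
  ∀ (k : ℕ) (n : Fin k → ℕ) (τ : ∀ i, Equiv.Perm (Fin (n i))) (a : D k) (b : ∀ i, D (n i)),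
    γ k n (a, fun i => τ i • b i) = blockSum τ • γ k n (a, b)

def compose (X : Type) {k : ℕ} (a : D k) (n : Fin k → ℕ) (b : ∀ i, D (n i))
    (x : ∀ i, Fin (n i) → X) : DD D X :=
  ⟨∑ i, n i, Quot.mk _ (γ k n (a, b), concatEquiv X n x)⟩

variable {γ}

theorem compose_eq_of_opRel (hγ : RightEquivariant γ) {X : Type} {k : ℕ} (a : D k)
    (n : Fin k → ℕ) {b b' : ∀ i, D (n i)} {x x' : ∀ i, Fin (n i) → X}
    (h : ∀ i, OpRel D X (n i) (b i, x i) (b' i, x' i)) :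
    compose γ X a n b x = compose γ X a n b' x' := by
  choose τ hτb hτx using h
  obtain rfl : b' = fun i => τ i • b i := funext fun i => (hτb i).symm
  obtain rfl : x' = fun i => x i ∘ (τ i).symm := funext fun i => (hτx i).symm
  refine (mk_eq_mk_iff_s3 _ _).2 ⟨blockSum τ, (hγ k n τ a b).symm, funext fun j => ?_⟩
  obtain ⟨t, rfl⟩ := (finSigmaEquiv n).surjective j
  simp [blockSum]

theorem compose_smul (hγ : LeftEquivariant γ) {X : Type} {k : ℕ} (σ : Equiv.Perm (Fin k))
    (a : D k) (n : Fin k → ℕ) (b : ∀ i, D (n i)) (x : ∀ i, Fin (n i) → X) :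
    compose γ X (σ • a) n b x =
      compose γ X a (fun i => n (σ i)) (fun i => b (σ i)) (fun i => x (σ i)) := by
  rw [compose, compose, hγ k n σ a b]
  refine (Eq.trans (mk_eq_mk_of_cast (Equiv.sum_comp σ n) _ _ (blockPerm σ n))
    (congrArg (fun y => (⟨_, Quot.mk _ (_, y)⟩ : DD D X)) (funext fun j => ?_))).symm
  obtain ⟨⟨i, u⟩, rfl⟩ := ((Equiv.sigmaCongrLeft (β := fun i => Fin (n i)) σ).trans
    (finSigmaEquiv n)).surjective j
  simp [blockPerm, -Equiv.sigmaCongrLeft_apply]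
  rfl

variable (γ)

noncomputable def mulRep (X : Type) {k : ℕ} (p : D k × (Fin k → DD D X)) : DD D X :=
  compose γ X p.1 (fun i => (p.2 i).1) (fun i => (p.2 i).2.out.1) (fun i => (p.2 i).2.out.2)

noncomputable def mul (X : Type) (P : DD D (DD D X)) : DD D X :=
  mulRep γ X P.2.out

variable {γ}

theorem mulRep_mk (hγ : RightEquivariant γ) {X : Type} {k : ℕ} (a : D k) (n : Fin k → ℕ)
    (b : ∀ i, D (n i)) (x : ∀ i, Fin (n i) → X) :
    mulRep γ X (a, fun i => ⟨n i, Quot.mk _ (b i, x i)⟩) = compose γ X a n b x :=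
  compose_eq_of_opRel hγ a n fun i => (opRel_equivalence X (n i)).quot_mk_eq_iff _ _ |>.1
    (Quot.out_eq _)

theorem mulRep_eq_of_opRel (hγ : LeftEquivariant γ) {X : Type} {k : ℕ}
    {p q : D k × (Fin k → DD D X)} (h : OpRel D (DD D X) k p q) :
    mulRep γ X p = mulRep γ X q := by
  obtain ⟨a, y⟩ := p
  obtain ⟨a', y'⟩ := q
  obtain ⟨σ, rfl, hy⟩ := h
  obtain rfl : y = fun i => y' (σ i) := funext fun i => by
    simpa using congrFun hy (σ i)
  exact (compose_smul hγ σ a (fun i => (y' i).1) (fun i => (y' i).2.out.1)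
    (fun i => (y' i).2.out.2)).symm

theorem mul_mk (hγl : LeftEquivariant γ) (hγr : RightEquivariant γ) {X : Type} {k : ℕ}
    (a : D k) (n : Fin k → ℕ) (b : ∀ i, D (n i)) (x : ∀ i, Fin (n i) → X) :
    mul γ X ⟨k, Quot.mk _ (a, fun i => ⟨n i, Quot.mk _ (b i, x i)⟩)⟩ = compose γ X a n b x :=
  (mulRep_eq_of_opRel hγl ((opRel_equivalence _ k).quot_mk_eq_iff _ _ |>.1
    (Quot.out_eq _))).trans (mulRep_mk hγr a n b x)

theorem DDmap_DDmap_mk {X Y : Type} (f : X → Y) {k : ℕ} (a : D k) (n : Fin k → ℕ)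
    (b : ∀ i, D (n i)) (x : ∀ i, Fin (n i) → X) :
    DDmap D (DDmap D f) ⟨k, Quot.mk _ (a, fun i => ⟨n i, Quot.mk _ (b i, x i)⟩)⟩ =
      ⟨k, Quot.mk _ (a, fun i => ⟨n i, Quot.mk _ (b i, f ∘ x i)⟩)⟩ :=
  rfl

theorem DDmap_compose {X Y : Type} (f : X → Y) {k : ℕ} (a : D k) (n : Fin k → ℕ)
    (b : ∀ i, D (n i)) (x : ∀ i, Fin (n i) → X) :
    DDmap D f (compose γ X a n b x) = compose γ Y a n b fun i => f ∘ x i :=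
  rfl

theorem DDmap_mul (hγl : LeftEquivariant γ) (hγr : RightEquivariant γ) {X Y : Type}
    (f : X → Y) (P : DD D (DD D X)) :
    DDmap D f (mul γ X P) = mul γ Y (DDmap D (DDmap D f) P) := by
  obtain ⟨k, a, n, b, x, rfl⟩ := exists_eq_mk_mk P
  rw [DDmap_DDmap_mk, mul_mk hγl hγr, mul_mk hγl hγr, DDmap_compose]

theorem compose_injective {X : Type} {k : ℕ} {a : D k} {n : Fin k → ℕ} {b : ∀ i, D (n i)}
    (free : ∀ σ : Equiv.Perm (Fin (∑ i, n i)), σ • γ k n (a, b) = γ k n (a, b) → σ = 1) :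
    Function.Injective (compose γ X a n b) :=
  fun _ _ h => (concatEquiv X n).injective (eq_of_mk_eq_mk_of_free free h)

theorem exists_mul_eq_and_DDmap_DDmap_eq (hγl : LeftEquivariant γ) (hγr : RightEquivariant γ)
    {X Y : Type} (f : X → Y) {p : DD D X} {q : DD D (DD D Y)} (h : DDmap D f p = mul γ Y q) :
    ∃ P, mul γ X P = p ∧ DDmap D (DDmap D f) P = q := by
  obtain ⟨k, a, n, b, y, rfl⟩ := exists_eq_mk_mk q
  rw [mul_mk hγl hγr] at h
  obtain ⟨x, rfl, hx⟩ := exists_eq_mk_of_DDmap_eq_mk_s3 f p h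
  have hy : (fun i => f ∘ (concatEquiv X n).symm x i) = y := by
    rw [← (concatEquiv Y n).symm_apply_apply y, ← hx]
    rfl
  refine ⟨⟨k, Quot.mk _ (a, fun i => ⟨n i, Quot.mk _ (b i, (concatEquiv X n).symm x i)⟩)⟩,
    ?_, ?_⟩
  · rw [mul_mk hγl hγr, compose, Equiv.apply_symm_apply]
  · subst hy
    rfl

theorem eq_of_mul_eq_of_DDmap_DDmap_eq
    (free : ∀ (n : ℕ) (σ : Equiv.Perm (Fin n)) (d : D n), σ • d = d → σ = 1)
    (hγl : LeftEquivariant γ) (hγr : RightEquivariant γ) {X Y : Type} (f : X → Y)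
    {P P' : DD D (DD D X)} (hmul : mul γ X P = mul γ X P')
    (hmap : DDmap D (DDmap D f) P = DDmap D (DDmap D f) P') : P = P' := by
  obtain ⟨k, a, n, b, x, rfl⟩ := exists_eq_mk_mk P'
  rw [DDmap_DDmap_mk] at hmap
  obtain ⟨x', rfl, -⟩ := exists_eq_mk_mk_of_DDmap_DDmap_eq f P hmap
  rw [mul_mk hγl hγr, mul_mk hγl hγr] at hmul
  rw [compose_injective (fun σ => free _ σ _) hmul]

theorem isPB_mul (free : ∀ (n : ℕ) (σ : Equiv.Perm (Fin n)) (d : D n), σ • d = d → σ = 1)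
    (hγl : LeftEquivariant γ) (hγr : RightEquivariant γ) {X Y : Type} (f : X → Y) :
    IsPB (mul γ X) (DDmap D (DDmap D f)) (DDmap D f) (mul γ Y) :=
  ⟨DDmap_mul hγl hγr f, fun _ _ h =>
    existsUnique_of_exists_of_unique (exists_mul_eq_and_DDmap_DDmap_eq hγl hγr f h)
      fun _ _ h₁ h₂ => eq_of_mul_eq_of_DDmap_DDmap_eq free hγl hγr f
        (h₁.1.trans h₂.1.symm) (h₁.2.trans h₂.2.symm)⟩

end DD

/-- The multiplication of the monad associated to a Σ-free operad in `Set` is well defined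
on the iterated quotients, and its naturality squares are pullbacks. -/
theorem DD_mul_welldefined_and_naturality_pullback
    (D : ℕ → Type) [∀ n, MulAction (Equiv.Perm (Fin n)) (D n)]
    (free : ∀ (n : ℕ) (σ : Equiv.Perm (Fin n)) (d : D n), σ • d = d → σ = 1)
    (γ : ∀ (k : ℕ) (n : Fin k → ℕ), D k × (∀ i, D (n i)) → D (∑ i, n i))
    (γ_perm_left : ∀ (k : ℕ) (n : Fin k → ℕ) (σ : Equiv.Perm (Fin k))
        (a : D k) (b : ∀ i, D (n i)),
      γ k n (σ • a, b) =
        blockPerm σ n • (cast (congrArg D (Equiv.sum_comp σ n))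
          (γ k (fun i => n (σ i)) (a, fun i => b (σ i)))))
    (γ_perm_right : ∀ (k : ℕ) (n : Fin k → ℕ) (τ : ∀ i, Equiv.Perm (Fin (n i)))
        (a : D k) (b : ∀ i, D (n i)),
      γ k n (a, fun i => τ i • b i) = blockSum τ • γ k n (a, b)) :
    ∃ μ : ∀ X : Type, DD D (DD D X) → DD D X,
      (∀ (X : Type) (k : ℕ) (a : D k) (n : Fin k → ℕ) (b : ∀ i, D (n i))
          (x : ∀ i, Fin (n i) → X),
        μ X ⟨k, Quot.mk _ (a, fun i => (⟨n i, Quot.mk _ (b i, x i)⟩ : DD D X))⟩ =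
          ⟨∑ i, n i, Quot.mk _ (γ k n (a, b),
            fun j => x ((finSigmaEquiv n).symm j).1 ((finSigmaEquiv n).symm j).2)⟩) ∧
      ∀ (X Y : Type) (f : X → Y),
        IsPB (μ X) (DDmap D (DDmap D f)) (DDmap D f) (μ Y) :=
  ⟨DD.mul γ, fun _ _ a n b x => DD.mul_mk γ_perm_left γ_perm_right a n b x,
    fun _ _ f => DD.isPB_mul free γ_perm_left γ_perm_right f⟩
end

section
/- Let f, g : A → B be functions between types admitting a common section s : B → A (f ∘ s = id and g ∘ s = id), and let h : B → C be a coequalizer of f and g in the category of types. Then for every natural number n, the maps (f ∘ ·), (g ∘ ·) : (Fin n → A) → (Fin n → B) given by postcomposition have (h ∘ ·) : (Fin n → B) → (Fin n → C) as a coequalizer in the category of types. (Finite powers preserve reflexive coequalizers of sets.) -/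
/-!
A coequalizer `h` of `f, g` in types is, up to isomorphism, the quotient of `B` by the
equivalence relation generated by `f a ~ g a`: it is surjective and `h b = h b'` exactly when
`b, b'` are joined by a zigzag of such steps. For the power, a zigzag `v ~ w` in `Fin n → B` is
built one coordinate at a time, and a single step in coordinate `i` is a step of the power pair
because the common section `s` lets the other coordinates of `v` be written as `f (s (v j))`
and as `g (s (v j))` simultaneously.
-/

universe u

/-- `h : B → C` is a coequalizer of `f, g : A → B` in the category of types. -/
def IsCoeq {A B C : Type u} (f g : A → B) (h : B → C) : Prop :=
  h ∘ f = h ∘ g ∧ ∀ {W : Type u} (q : B → W), q ∘ f = q ∘ g → ∃! q' : C → W, q' ∘ h = q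

open Function

def coeqRel {A B : Type*} (f g : A → B) (b b' : B) : Prop :=
  ∃ a, f a = b ∧ g a = b'

theorem eq_of_coeqRel {A B W : Type*} {f g : A → B} {q : B → W} (hq : q ∘ f = q ∘ g) :
    ∀ b b', coeqRel f g b b' → q b = q b'
  | _, _, ⟨a, rfl, rfl⟩ => congrFun hq a

section IsCoeq

variable {A B C : Type u} {f g : A → B} {h : B → C}

theorem IsCoeq.exists_leftInverse_quotLift (hco : IsCoeq f g h) :
    ∃ p : C → Quot (coeqRel f g), p ∘ h = Quot.mk _ ∧
      LeftInverse (Quot.lift h (eq_of_coeqRel hco.1)) p := by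
  obtain ⟨p, hp, -⟩ := hco.2 (Quot.mk (coeqRel f g)) (funext fun a => Quot.sound ⟨a, rfl, rfl⟩)
  refine ⟨p, hp, congrFun ((hco.2 h hco.1).unique ?_ rfl)⟩
  exact funext fun b => congrArg (Quot.lift h _) (congrFun hp b)

theorem IsCoeq.surjective (hco : IsCoeq f g h) : Surjective h := by
  obtain ⟨p, -, hp⟩ := hco.exists_leftInverse_quotLift
  intro c
  obtain ⟨b, hb⟩ := hp.surjective c
  induction b using Quot.ind
  exact ⟨_, hb⟩

theorem IsCoeq.eqvGen_of_eq (hco : IsCoeq f g h) {b b' : B} (hbb' : h b = h b') :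
    Relation.EqvGen (coeqRel f g) b b' := by
  obtain ⟨p, hp, -⟩ := hco.exists_leftInverse_quotLift
  apply Quot.eqvGen_exact
  rw [← congrFun hp b, ← congrFun hp b', comp_apply, comp_apply, hbb']

theorem isCoeq_of_surjective_of_eqvGen (hfg : h ∘ f = h ∘ g) (hsurj : Surjective h)
    (hker : ∀ b b', h b = h b' → Relation.EqvGen (coeqRel f g) b b') : IsCoeq f g h := by
  refine ⟨hfg, fun q hq => ?_⟩
  have hfac : (q ∘ surjInv hsurj) ∘ h = q := funext fun b =>
    congrArg (Quot.lift q (eq_of_coeqRel hq))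
      (Quot.eqvGen_sound (hker _ _ (rightInverse_surjInv hsurj (h b))))
  exact ⟨_, hfac, fun q' hq' => hsurj.injective_comp_right (hq'.trans hfac.symm)⟩

end IsCoeq

section Pi

variable {ι B : Type*} [DecidableEq ι]

theorem Relation.EqvGen.update {r : B → B → Prop} {R : (ι → B) → (ι → B) → Prop}
    (hR : ∀ u i b b', r b b' → R (Function.update u i b) (Function.update u i b'))
    (u : ι → B) (i : ι) {b b' : B} (hbb' : Relation.EqvGen r b b') :
    Relation.EqvGen R (Function.update u i b) (Function.update u i b') := by
  induction hbb' with
  | rel b b' hr => exact .rel _ _ (hR u i b b' hr)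
  | refl b => exact .refl _
  | symm b b' _ ih => exact ih.symm
  | trans b b' b'' _ _ ih ih' => exact ih.trans _ _ _ ih'

theorem Relation.EqvGen.pi [Fintype ι] {r : B → B → Prop} {R : (ι → B) → (ι → B) → Prop}
    (hR : ∀ u i b b', r b b' → R (Function.update u i b) (Function.update u i b'))
    {v w : ι → B} (hvw : ∀ i, Relation.EqvGen r (v i) (w i)) : Relation.EqvGen R v w := by
  have hpiecewise : ∀ t : Finset ι, Relation.EqvGen R v (t.piecewise w v) := by
    intro t
    induction t using Finset.induction_on with
    | empty => rw [Finset.piecewise_empty]; exact .refl v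
    | insert i t hi ih =>
      refine ih.trans _ _ _ ?_
      -- the two piecewise functions differ only at `i`, where they take the values `v i`, `w i`
      conv_lhs =>
        rw [← update_eq_self i (t.piecewise w v), Finset.piecewise_eq_of_notMem _ _ _ hi]
      rw [Finset.piecewise_insert]
      exact (hvw i).update hR _ i
  simpa only [Finset.piecewise_univ] using hpiecewise Finset.univ

theorem coeqRel_comp_update_of_section {A : Type*} {f g : A → B} {s : B → A}
    (hsf : f ∘ s = id) (hsg : g ∘ s = id) (u : ι → B) (i : ι) {b b' : B}
    (hbb' : coeqRel f g b b') :
    coeqRel (fun v : ι → A => f ∘ v) (fun v => g ∘ v) (update u i b) (update u i b') := by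
  obtain ⟨a, rfl, rfl⟩ := hbb'
  refine ⟨update (s ∘ u) i a, ?_, ?_⟩
  · dsimp only
    rw [comp_update, ← comp_assoc, hsf, id_comp]
  · dsimp only
    rw [comp_update, ← comp_assoc, hsg, id_comp]

end Pi

/-- Finite powers preserve reflexive coequalizers of types. -/
theorem pow_preserves_reflexive_coequalizers
    {A B C : Type u} (f g : A → B) (s : B → A)
    (hsf : f ∘ s = id) (hsg : g ∘ s = id)
    (h : B → C) (hco : IsCoeq f g h) (n : ℕ) :
    IsCoeq (fun v : Fin n → A => f ∘ v) (fun v : Fin n → A => g ∘ v)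
      (fun v : Fin n → B => h ∘ v) := by
  refine isCoeq_of_surjective_of_eqvGen ?_ hco.surjective.comp_left fun v w hvw => ?_
  · exact funext fun v => congrArg (· ∘ v) hco.1
  · exact .pi (coeqRel_comp_update_of_section hsf hsg) fun i =>
      hco.eqvGen_of_eq (congrFun hvw i)
end
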